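/- arXiv:2407.03608 — 2 statements merged into one kernel-verified Lean document; each statement's English description precedes it below -/
import Mathlib

section
/- For ν > 0, the function φ_ν(r) = (1/(2^{ν-1}Γ(ν))) |√(2ν) r|^ν K_ν(√(2ν) r), where K_ν is the modified Bessel function of the second kind, admits the Schoenberg presentation φ_ν(r) = ∫_{-∞}^{∞} exp(-r²/(2χ(t)²)) u(t) dt with u(t) = (1/Γ(ν)) e^{νt - e^t} and χ(t) = ν^{-1/2} e^{t/2}. -/
open MeasureTheory

/-- The modified Bessel function of the second kind `K_ν`, via its standard integral
representation (valid for positive argument). -/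
noncomputable def besselK (ν x : ℝ) : ℝ :=
  ∫ t in Set.Ioi (0 : ℝ), Real.exp (-x * Real.cosh t) * Real.cosh (ν * t)

lemma sq_div_eight_le_cosh (t : ℝ) : t ^ 2 / 8 ≤ Real.cosh t := by
  rw [← Real.cosh_abs, Real.cosh_eq]
  have h1 := Real.add_one_le_exp (|t| / 2)
  have h2 := Real.exp_pos (-|t|)
  have h3 : Real.exp |t| = Real.exp (|t| / 2) * Real.exp (|t| / 2) := by
    rw [← Real.exp_add]; ring_nf
  have h4 : (0:ℝ) ≤ |t| := abs_nonneg t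
  have h5 : |t| ^ 2 = t ^ 2 := sq_abs t
  nlinarith [Real.exp_pos (|t| / 2)]

lemma integrable_exp_nu_sub_cosh (ν x : ℝ) (hx : 0 < x) :
    Integrable (fun t : ℝ => Real.exp (ν * t - x * Real.cosh t)) := by
  have hg : Integrable (fun t : ℝ =>
      Real.exp (2 * ν ^ 2 / x) * Real.exp (-(x / 8) * (t - 4 * ν / x) ^ 2)) := by
    exact ((integrable_exp_neg_mul_sq (by linarith)).comp_sub_right (4 * ν / x)).const_mul _
  refine hg.mono ?_ ?_
  · exact (Real.continuous_exp.comp (by fun_prop)).aestronglyMeasurable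
  · filter_upwards with t
    rw [Real.norm_eq_abs, Real.norm_eq_abs, abs_of_pos (Real.exp_pos _),
      abs_of_pos (by positivity : (0:ℝ) < Real.exp (2 * ν ^ 2 / x) *
        Real.exp (-(x / 8) * (t - 4 * ν / x) ^ 2)), ← Real.exp_add]
    apply Real.exp_le_exp.2
    have h := sq_div_eight_le_cosh t
    have hm : x * (t ^ 2 / 8) ≤ x * Real.cosh t :=
      mul_le_mul_of_nonneg_left h hx.le
    have hid : 2 * ν ^ 2 / x + -(x / 8) * (t - 4 * ν / x) ^ 2
        = ν * t - x * (t ^ 2 / 8) := by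
      field_simp
      ring
    rw [hid]
    linarith

/-- Schoenberg presentation of the Matérn function: for `ν > 0` and `r > 0`,
`φ_ν(r) = ∫ exp(-r²/(2χ(t)²)) u(t) dt` with `u(t) = e^{νt-e^t}/Γ(ν)` and
`χ(t) = ν^{-1/2} e^{t/2}`. -/
theorem stmt3 (ν : ℝ) (hν : 0 < ν) (r : ℝ) (hr : 0 < r) :
    (1 / (2 ^ (ν - 1) * Real.Gamma ν)) * |Real.sqrt (2*ν) * r| ^ ν
        * besselK ν (Real.sqrt (2*ν) * r)
      = ∫ t : ℝ,
          Real.exp (-r^2 / (2 * (Real.exp (t/2) / Real.sqrt ν)^2))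
            * ((1 / Real.Gamma ν) * Real.exp (ν * t - Real.exp t)) := by
  set x : ℝ := Real.sqrt (2*ν) * r with hxdef
  have hx : 0 < x := mul_pos (Real.sqrt_pos.2 (by linarith)) hr
  have hΓ : 0 < Real.Gamma ν := Real.Gamma_pos_of_pos hν
  set F : ℝ → ℝ := fun t => Real.exp (ν * t - x * Real.cosh t) with hFdef
  have hFint : Integrable F := integrable_exp_nu_sub_cosh ν x hx
  -- Step 1: rewrite RHS integrand
  have hx2 : x ^ 2 = 2 * ν * r ^ 2 := by
    rw [hxdef, mul_pow, Real.sq_sqrt (by linarith)]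
  have step1 : ∀ t : ℝ,
      Real.exp (-r^2 / (2 * (Real.exp (t/2) / Real.sqrt ν)^2))
          * ((1 / Real.Gamma ν) * Real.exp (ν * t - Real.exp t))
        = (1 / Real.Gamma ν)
          * Real.exp (ν * t - Real.exp t - x ^ 2 / 4 * Real.exp (-t)) := by
    intro t
    have he : (Real.exp (t/2))^2 = Real.exp t := by
      rw [sq, ← Real.exp_add]; norm_num
    have hsν : (Real.sqrt ν)^2 = ν := Real.sq_sqrt hν.le
    have harg : -r^2 / (2 * (Real.exp (t/2) / Real.sqrt ν)^2)
        = -(x ^ 2 / 4 * Real.exp (-t)) := by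
      rw [div_pow, he, hsν, hx2, Real.exp_neg]
      have h1 : Real.exp t ≠ 0 := (Real.exp_pos t).ne'
      field_simp
      ring
    rw [harg]
    rw [show ν * t - Real.exp t - x ^ 2 / 4 * Real.exp (-t)
        = -(x ^ 2 / 4 * Real.exp (-t)) + (ν * t - Real.exp t) by ring, Real.exp_add]
    ring
  -- Step 2: translation t = u + log (x/2)
  have hxhalf : (0:ℝ) < x / 2 := by linarith
  have step2 : (∫ t : ℝ, Real.exp (ν * t - Real.exp t - x ^ 2 / 4 * Real.exp (-t)))
      = (x/2) ^ ν * ∫ u : ℝ, F u := by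
    have := (integral_add_right_eq_self (μ := (volume : Measure ℝ))
      (fun t : ℝ => Real.exp (ν * t - Real.exp t - x ^ 2 / 4 * Real.exp (-t)))
      (Real.log (x/2))).symm
    rw [this]
    rw [← integral_const_mul]
    congr 1 with u
    have hel : Real.exp (Real.log (x/2)) = x/2 := Real.exp_log hxhalf
    have h1 : Real.exp (u + Real.log (x/2)) = Real.exp u * (x/2) := by
      rw [Real.exp_add, hel]
    have h2 : Real.exp (-(u + Real.log (x/2))) = Real.exp (-u) * (x/2)⁻¹ := by
      rw [neg_add, Real.exp_add]
      congr 1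
      rw [Real.exp_neg, hel]
    have h3 : (x/2 : ℝ) ^ ν = Real.exp (ν * Real.log (x/2)) := by
      rw [Real.rpow_def_of_pos hxhalf, mul_comm]
    have h4 : x ^ 2 / 4 * (Real.exp (-u) * (x/2)⁻¹) = (x/2) * Real.exp (-u) := by
      field_simp; ring
    rw [h1, h2, h4, h3, hFdef]
    simp only [← Real.exp_add]
    congr 1
    rw [Real.cosh_eq]
    ring
  -- Step 3: reflection, full-line integral of F equals 2 * besselK
  have hGint : Integrable (fun u : ℝ => Real.exp (-(ν * u) - x * Real.cosh u)) := by
    have := integrable_exp_nu_sub_cosh (-ν) x hx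
    simpa using this
  have step3 : (∫ u : ℝ, F u) = 2 * besselK ν x := by
    have hsplit := intervalIntegral.integral_Iic_add_Ioi (b := (0:ℝ)) (f := F)
      hFint.integrableOn hFint.integrableOn
    have hrefl : (∫ u in Set.Iic (0:ℝ), F u)
        = ∫ u in Set.Ioi (0:ℝ), Real.exp (-(ν * u) - x * Real.cosh u) := by
      have : ∀ u : ℝ, F u
          = (fun v : ℝ => Real.exp (-(ν * v) - x * Real.cosh v)) (-u) := by
        intro u
        simp [hFdef, Real.cosh_neg]
      have h0 := integral_comp_neg_Iic (0:ℝ)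
        (fun v : ℝ => Real.exp (-(ν * v) - x * Real.cosh v))
      simp only [neg_zero] at h0
      rw [← h0]
      exact setIntegral_congr_fun measurableSet_Iic fun u _ => this u
    rw [← hsplit, hrefl]
    rw [← integral_add (hGint.integrableOn) (hFint.integrableOn)]
    rw [besselK, ← integral_const_mul]
    congr 1 with u
    rw [hFdef]
    simp only [Real.cosh_eq (ν * u)]
    rw [show -(ν*u) - x * Real.cosh u = -(ν*u) + (- x * Real.cosh u) by ring,
      show ν*u - x * Real.cosh u = ν*u + (- x * Real.cosh u) by ring,
      Real.exp_add, Real.exp_add]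
    ring
  -- Put everything together
  simp only [step1]
  rw [integral_const_mul, step2, step3]
  rw [abs_of_pos hx]
  have h2ν : (2:ℝ) ^ (ν - 1) * 2 = 2 ^ ν := by
    rw [← Real.rpow_add_one (by norm_num : (2:ℝ) ≠ 0) (ν - 1)]
    norm_num
  have hdiv : (x/2) ^ ν = x ^ ν / 2 ^ ν := Real.div_rpow hx.le (by norm_num) ν
  rw [hdiv, ← h2ν]
  have h1 : (2:ℝ) ^ (ν - 1) ≠ 0 := (Real.rpow_pos_of_pos two_pos _).ne'
  field_simp
end

section
/- Let x, y ∈ ℝ^d, let K(x,y) = w(x)w(y)(2π[σ²(x)+σ²(y)])^{-d/2} φ(|x-y|/√(σ²(x)+σ²(y))) with φ(r) = ∫ e^{-r²/(2χ(t)²)} u(t) dt for functions χ: ℝ→(0,∞) and u: ℝ→[0,∞). Define B_t(x,z) = w(x)[2πσ²(x)]^{-d/2} exp(-|x-z|²/(2σ(x)²χ(t)²)) and v(t) = χ(t)^{-d}u(t). Then K(x,y) = ∫_ℝ (∫_{ℝ^d} B_t(x,z)B_t(y,z) dz) v(t) dt, i.e., K = ∫ B_t B_t* v(t) dt. -/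
/-!
For fixed `t` the inner integral is the product integral of two Gaussians in `z` with variances
`A = σ(x)²χ(t)²` and `B = σ(y)²χ(t)²`. Completing the square in `z` leaves a Gaussian centred at
`(B x + A y)/(A + B)`, whose integral is `(2πAB/(A+B))^{d/2}`, times `exp(-|x-y|²/(2(A+B)))`.
Since `A + B = (σ(x)² + σ(y)²)χ(t)²`, this exponential is the integrand of `φ` at
`r = |x-y|/√(σ(x)² + σ(y)²)`, and the normalising constants collapse to `(2π(σ(x)² + σ(y)²))^{-d/2}`
exactly because of the weight `χ(t)^{-d}` in `v`.
-/

open MeasureTheory Real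

section GaussianProduct

variable {E : Type*} [NormedAddCommGroup E] [InnerProductSpace ℝ E]

theorem norm_sub_sq_div_add_norm_sub_sq_div {A B : ℝ} (hA : 0 < A) (hB : 0 < B) (x y z : E) :
    ‖x - z‖ ^ 2 / (2 * A) + ‖y - z‖ ^ 2 / (2 * B)
      = (A + B) / (2 * A * B) * ‖z - ((B / (A + B)) • x + (A / (A + B)) • y)‖ ^ 2
        + ‖x - y‖ ^ 2 / (2 * (A + B)) := by
  have hAB : 0 < A + B := add_pos hA hB
  simp only [norm_sub_sq_real, norm_add_sq_real, inner_add_right, real_inner_smul_left,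
    real_inner_smul_right, norm_smul, Real.norm_eq_abs, mul_pow, sq_abs,
    real_inner_comm x z, real_inner_comm y z]
  field_simp
  ring

variable [FiniteDimensional ℝ E] [MeasurableSpace E] [BorelSpace E]

theorem integral_exp_neg_norm_sub_sq_mul_exp_neg_norm_sub_sq {A B : ℝ} (hA : 0 < A) (hB : 0 < B)
    (x y : E) :
    ∫ z : E, exp (-‖x - z‖ ^ 2 / (2 * A)) * exp (-‖y - z‖ ^ 2 / (2 * B))
      = (2 * π * A * B / (A + B)) ^ (Module.finrank ℝ E / 2 : ℝ)
          * exp (-‖x - y‖ ^ 2 / (2 * (A + B))) := by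
  have hAB : 0 < A + B := add_pos hA hB
  have hc : 0 < (A + B) / (2 * A * B) := by positivity
  have hsplit : ∀ z : E, exp (-‖x - z‖ ^ 2 / (2 * A)) * exp (-‖y - z‖ ^ 2 / (2 * B))
      = exp (-‖x - y‖ ^ 2 / (2 * (A + B)))
        * exp (-((A + B) / (2 * A * B)) * ‖z - ((B / (A + B)) • x + (A / (A + B)) • y)‖ ^ 2) := by
    intro z
    rw [← exp_add, ← exp_add, neg_div, neg_div, neg_div, neg_mul, ← neg_add, ← neg_add,
      norm_sub_sq_div_add_norm_sub_sq_div hA hB, add_comm]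
  simp_rw [hsplit]
  rw [integral_const_mul, integral_sub_right_eq_self (fun z : E ↦ exp (-_ * ‖z‖ ^ 2)),
    GaussianFourier.integral_rexp_neg_mul_sq_norm hc, mul_comm]
  congr 2
  field_simp

end GaussianProduct

theorem gaussian_normalizers_eq (n : ℝ) {P Q c : ℝ} (hP : 0 < P) (hQ : 0 < Q) (hc : 0 < c) :
    c ^ (-n) * ((2 * π * P) ^ (-n / 2) * (2 * π * Q) ^ (-n / 2)
      * (2 * π * (P * c ^ 2) * (Q * c ^ 2) / (P * c ^ 2 + Q * c ^ 2)) ^ (n / 2))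
    = (2 * π * (P + Q)) ^ (-n / 2) := by
  have hP' : 0 < 2 * π * P := by positivity
  have hQ' : 0 < 2 * π * Q := by positivity
  have hPQ' : 0 < 2 * π * (P + Q) := by positivity
  have hc2 : 0 < c ^ 2 := by positivity
  have hfactor : 2 * π * (P * c ^ 2) * (Q * c ^ 2) / (P * c ^ 2 + Q * c ^ 2)
      = c ^ 2 * (2 * π * P) * (2 * π * Q) / (2 * π * (P + Q)) := by
    field_simp
  have hc_rpow : c ^ (-n) = (c ^ 2) ^ (-n / 2) := by
    rw [← rpow_natCast, ← rpow_mul hc.le]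
    ring_nf
  rw [hfactor, hc_rpow, div_rpow (by positivity) hPQ'.le, mul_rpow (by positivity) hQ'.le,
    mul_rpow hc2.le hP'.le, neg_div, rpow_neg hc2.le, rpow_neg hP'.le, rpow_neg hQ'.le,
    rpow_neg hPQ'.le]
  have := rpow_pos_of_pos hc2 (n / 2)
  have := rpow_pos_of_pos hP' (n / 2)
  have := rpow_pos_of_pos hQ' (n / 2)
  have := rpow_pos_of_pos hPQ' (n / 2)
  field_simp

section ScaledGaussianProduct

variable {E : Type*} [NormedAddCommGroup E] [InnerProductSpace ℝ E] [FiniteDimensional ℝ E]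
  [MeasurableSpace E] [BorelSpace E]

theorem rpow_neg_finrank_mul_integral_scaled_gaussian_mul {P Q c : ℝ} (hP : 0 < P) (hQ : 0 < Q)
    (hc : 0 < c) (x y : E) :
    c ^ (-(Module.finrank ℝ E : ℝ)) * ∫ z : E,
        (2 * π * P) ^ (-(Module.finrank ℝ E : ℝ) / 2) * exp (-‖x - z‖ ^ 2 / (2 * P * c ^ 2))
          * ((2 * π * Q) ^ (-(Module.finrank ℝ E : ℝ) / 2)
            * exp (-‖y - z‖ ^ 2 / (2 * Q * c ^ 2)))
      = (2 * π * (P + Q)) ^ (-(Module.finrank ℝ E : ℝ) / 2)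
          * exp (-(‖x - y‖ / √(P + Q)) ^ 2 / (2 * c ^ 2)) := by
  have hA : 0 < P * c ^ 2 := by positivity
  have hB : 0 < Q * c ^ 2 := by positivity
  have hexponent : -(‖x - y‖ / √(P + Q)) ^ 2 / (2 * c ^ 2)
      = -‖x - y‖ ^ 2 / (2 * (P * c ^ 2 + Q * c ^ 2)) := by
    rw [div_pow, sq_sqrt (add_pos hP hQ).le]
    field_simp
  have hinner : ∫ z : E,
        (2 * π * P) ^ (-(Module.finrank ℝ E : ℝ) / 2) * exp (-‖x - z‖ ^ 2 / (2 * P * c ^ 2))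
          * ((2 * π * Q) ^ (-(Module.finrank ℝ E : ℝ) / 2)
            * exp (-‖y - z‖ ^ 2 / (2 * Q * c ^ 2)))
      = (2 * π * P) ^ (-(Module.finrank ℝ E : ℝ) / 2)
          * (2 * π * Q) ^ (-(Module.finrank ℝ E : ℝ) / 2)
          * ∫ z : E, exp (-‖x - z‖ ^ 2 / (2 * (P * c ^ 2)))
              * exp (-‖y - z‖ ^ 2 / (2 * (Q * c ^ 2))) := by
    rw [← integral_const_mul]
    congr 1 with z
    rw [mul_assoc 2 P, mul_assoc 2 Q]
    ring
  rw [hinner, integral_exp_neg_norm_sub_sq_mul_exp_neg_norm_sub_sq hA hB, hexponent,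
    ← gaussian_normalizers_eq _ hP hQ hc]
  ring

end ScaledGaussianProduct

theorem stmt17_general (d : ℕ) (σ w : EuclideanSpace ℝ (Fin d) → ℝ) (χ u : ℝ → ℝ)
    (hσ : ∀ x, 0 < σ x) (hχ : ∀ t, 0 < χ t)
    (φ : ℝ → ℝ) (hφ : ∀ r, φ r = ∫ t : ℝ, Real.exp (-r^2 / (2 * (χ t)^2)) * u t)
    (x y : EuclideanSpace ℝ (Fin d)) :
    w x * w y * (2 * Real.pi * ((σ x)^2 + (σ y)^2)) ^ (-(d : ℝ) / 2)
        * φ (‖x - y‖ / Real.sqrt ((σ x)^2 + (σ y)^2))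
      = ∫ t : ℝ,
          (∫ z : EuclideanSpace ℝ (Fin d),
              (w x * (2 * Real.pi * (σ x)^2) ^ (-(d : ℝ) / 2)
                  * Real.exp (-‖x - z‖^2 / (2 * (σ x)^2 * (χ t)^2)))
                * (w y * (2 * Real.pi * (σ y)^2) ^ (-(d : ℝ) / 2)
                  * Real.exp (-‖y - z‖^2 / (2 * (σ y)^2 * (χ t)^2))))
            * ((χ t) ^ (-(d : ℝ)) * u t) := by
  rw [hφ, ← integral_const_mul]
  congr 1 with t
  have hfiber := rpow_neg_finrank_mul_integral_scaled_gaussian_mul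
    (pow_pos (hσ x) 2) (pow_pos (hσ y) 2) (hχ t) x y
  rw [finrank_euclideanSpace_fin] at hfiber
  calc _ = w x * w y * u t * ((2 * π * (σ x ^ 2 + σ y ^ 2)) ^ (-(d : ℝ) / 2)
          * exp (-(‖x - y‖ / √(σ x ^ 2 + σ y ^ 2)) ^ 2 / (2 * χ t ^ 2))) := by ring
    _ = _ := by
      rw [← hfiber, ← integral_const_mul, ← integral_const_mul, ← integral_mul_const]
      congr 1 with z
      ring

/-- Exact integral presentation of the non-stationary isotropic kernel:
`K(x,y) = ∫_ℝ (∫_{ℝ^d} B_t(x,z) B_t(y,z) dz) v(t) dt`, where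
`B_t(x,z) = w(x)[2πσ²(x)]^{-d/2} exp(-|x-z|²/(2σ(x)²χ(t)²))`, `v(t) = χ(t)^{-d}u(t)`,
and `K(x,y) = w(x)w(y)(2π[σ²(x)+σ²(y)])^{-d/2} φ(|x-y|/√(σ²(x)+σ²(y)))` with
`φ(r) = ∫ e^{-r²/(2χ(t)²)} u(t) dt`. -/
theorem stmt17 (d : ℕ) (σ w : EuclideanSpace ℝ (Fin d) → ℝ) (χ u : ℝ → ℝ)
    (hσ : ∀ x, 0 < σ x) (hw : ∀ x, 0 ≤ w x) (hχ : ∀ t, 0 < χ t) (hu : ∀ t, 0 ≤ u t)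
    (φ : ℝ → ℝ) (hφ : ∀ r, φ r = ∫ t : ℝ, Real.exp (-r^2 / (2 * (χ t)^2)) * u t)
    (x y : EuclideanSpace ℝ (Fin d)) :
    w x * w y * (2 * Real.pi * ((σ x)^2 + (σ y)^2)) ^ (-(d : ℝ) / 2)
        * φ (‖x - y‖ / Real.sqrt ((σ x)^2 + (σ y)^2))
      = ∫ t : ℝ,
          (∫ z : EuclideanSpace ℝ (Fin d),
              (w x * (2 * Real.pi * (σ x)^2) ^ (-(d : ℝ) / 2)
                  * Real.exp (-‖x - z‖^2 / (2 * (σ x)^2 * (χ t)^2)))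
                * (w y * (2 * Real.pi * (σ y)^2) ^ (-(d : ℝ) / 2)
                  * Real.exp (-‖y - z‖^2 / (2 * (σ y)^2 * (χ t)^2))))
            * ((χ t) ^ (-(d : ℝ)) * u t) :=
  stmt17_general d σ w χ u hσ hχ φ hφ x y
end
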